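/- In every QBDi3-model: (i) no sentence A satisfies both 1 ∈ I(w,A) and 0 ∈ I(w,A) at any world w; (ii) for every sentence A (with parameters from D(w)) and every world w, for all x ≥ w there exists y ≥ x such that 1 ∈ I(y,A) or 0 ∈ I(y,A). -/
import Mathlib


inductive Fm : Type where
  | atom : Nat → Fm
  | bot : Fm
  | snot : Fm → Fm
  | and : Fm → Fm → Fm
  | or : Fm → Fm → Fm
  | imp : Fm → Fm → Fm
deriving DecidableEq

/-- Intuitionistic/Boolean negation `¬A := A → ⊥`. -/
def negFm (A : Fm) : Fm := Fm.imp A Fm.bot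

/-- Biconditional `A ↔ B := (A→B) ∧ (B→A)`. -/
def iffFm (A B : Fm) : Fm := Fm.and (Fm.imp A B) (Fm.imp B A)

structure KModel where
  W : Type
  le : W → W → Prop
  refl : ∀ w, le w w
  trans : ∀ {u v w}, le u v → le v w → le u w
  antisymm : ∀ {u v}, le u v → le v u → u = v
  Vp : W → Nat → Prop
  Vm : W → Nat → Prop
  monoP : ∀ {w x n}, le w x → Vp w n → Vp x n
  monoM : ∀ {w x n}, le w x → Vm w n → Vm x n

/-- BDi3 forcing: `(force M A w).1` is "1 ∈ I(w,A)", `(force M A w).2` is "0 ∈ I(w,A)". -/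
def force (M : KModel) : Fm → M.W → Prop × Prop
  | .atom n, w => (M.Vp w n, M.Vm w n)
  | .bot, _ => (False, True)
  | .snot A, w => ((force M A w).2, (force M A w).1)
  | .and A B, w => ((force M A w).1 ∧ (force M B w).1, (force M A w).2 ∨ (force M B w).2)
  | .or A B, w => ((force M A w).1 ∨ (force M B w).1, (force M A w).2 ∧ (force M B w).2)
  | .imp A B, w =>
      ((∀ x, M.le w x → (force M A x).1 → (force M B x).1),
       (∀ x, M.le w x → ¬ (force M A x).2) ∧ (force M B w).2)

structure BDi3Model extends KModel where
  disjoint : ∀ w n, ¬ (Vp w n ∧ Vm w n)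
  maxsucc : ∀ w, ∃ x, le w x ∧ ∀ y, le x y → y = x
  po : ∀ w x n, le w x → ∃ y, le x y ∧ (Vp y n ∨ Vm y n)

lemma force_mono (M : KModel) (A : Fm) : ∀ {w x : M.W}, M.le w x →
    (((force M A w).1 → (force M A x).1) ∧ ((force M A w).2 → (force M A x).2)) := by
  induction A with
  | atom n => intro w x h; exact ⟨M.monoP h, M.monoM h⟩
  | bot => intro w x h; exact ⟨id, id⟩
  | snot A ih => intro w x h; exact ⟨(ih h).2, (ih h).1⟩
  | and A B ihA ihB =>
    intro w x h
    exact ⟨fun ⟨a, b⟩ => ⟨(ihA h).1 a, (ihB h).1 b⟩,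
      fun hd => hd.elim (fun a => Or.inl ((ihA h).2 a)) (fun b => Or.inr ((ihB h).2 b))⟩
  | or A B ihA ihB =>
    intro w x h
    exact ⟨fun hd => hd.elim (fun a => Or.inl ((ihA h).1 a)) (fun b => Or.inr ((ihB h).1 b)),
      fun ⟨a, b⟩ => ⟨(ihA h).2 a, (ihB h).2 b⟩⟩
  | imp A B ihA ihB =>
    intro w x h
    refine ⟨fun h1 y hy => h1 y (M.trans h hy), fun ⟨h1, h2⟩ => ⟨fun y hy => h1 y (M.trans h hy), (ihB h).2 h2⟩⟩

lemma bdi3_key (M : BDi3Model) (A : Fm) :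
    (∀ w : M.W, ¬ ((force M.toKModel A w).1 ∧ (force M.toKModel A w).2)) ∧
    (∀ m : M.W, (∀ y, M.le m y → y = m) →
      ((force M.toKModel A m).1 ∨ (force M.toKModel A m).2)) := by
  induction A with
  | atom n =>
    refine ⟨fun w => M.disjoint w n, fun m hm => ?_⟩
    obtain ⟨y, hy, hd⟩ := M.po m m n (M.refl m)
    rwa [hm y hy] at hd
  | bot => exact ⟨fun w h => h.1, fun m _ => Or.inr trivial⟩
  | snot A ih =>
    exact ⟨fun w h => ih.1 w ⟨h.2, h.1⟩, fun m hm => (ih.2 m hm).symm⟩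
  | and A B ihA ihB =>
    refine ⟨fun w h => ?_, fun m hm => ?_⟩
    · rcases h with ⟨⟨a1, b1⟩, h2⟩
      exact h2.elim (fun a2 => ihA.1 w ⟨a1, a2⟩) (fun b2 => ihB.1 w ⟨b1, b2⟩)
    · rcases ihA.2 m hm with a1 | a2
      · rcases ihB.2 m hm with b1 | b2
        · exact Or.inl ⟨a1, b1⟩
        · exact Or.inr (Or.inr b2)
      · exact Or.inr (Or.inl a2)
  | or A B ihA ihB =>
    refine ⟨fun w h => ?_, fun m hm => ?_⟩
    · rcases h with ⟨h1, ⟨a2, b2⟩⟩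
      exact h1.elim (fun a1 => ihA.1 w ⟨a1, a2⟩) (fun b1 => ihB.1 w ⟨b1, b2⟩)
    · rcases ihA.2 m hm with a1 | a2
      · exact Or.inl (Or.inl a1)
      · rcases ihB.2 m hm with b1 | b2
        · exact Or.inl (Or.inr b1)
        · exact Or.inr ⟨a2, b2⟩
  | imp A B ihA ihB =>
    refine ⟨fun w h => ?_, fun m hm => ?_⟩
    · rcases h with ⟨h1, hnA, hB2⟩
      obtain ⟨m, hwm, hm⟩ := M.maxsucc w
      rcases ihA.2 m hm with a1 | a2
      · exact ihB.1 m ⟨h1 m hwm a1, (force_mono M.toKModel B hwm).2 hB2⟩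
      · exact hnA m hwm a2
    · rcases ihA.2 m hm with a1 | a2
      · rcases ihB.2 m hm with b1 | b2
        · exact Or.inl (fun y hy _ => (hm y hy) ▸ b1)
        · exact Or.inr ⟨fun y hy ha2 => ihA.1 m ⟨a1, (hm y hy) ▸ ha2⟩, b2⟩
      · exact Or.inl (fun y hy ha1 => absurd ⟨(hm y hy) ▸ ha1, a2⟩ (ihA.1 m))

/-- Proposition 8: in every BDi3-model, (i) no sentence is both true and false
at a world, and (ii) every sentence is eventually determined: for all `x ≥ w`
there is `y ≥ x` at which the sentence is true or false. -/
theorem bdi3_disjoint_and_potentially_omniscient (M : BDi3Model) (A : Fm) :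
    (∀ w : M.W, ¬ ((force M.toKModel A w).1 ∧ (force M.toKModel A w).2)) ∧
    (∀ w x : M.W, M.le w x →
      ∃ y, M.le x y ∧ ((force M.toKModel A y).1 ∨ (force M.toKModel A y).2)) := by
  refine ⟨(bdi3_key M A).1, fun w x hwx => ?_⟩
  obtain ⟨m, hxm, hm⟩ := M.maxsucc x
  exact ⟨m, hxm, (bdi3_key M A).2 m hm⟩
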